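/- For a rooted bifurcating tree T with n leaves, C(T) = 0 if and only if n is a power of 2 and T is the fully symmetric tree of height log₂(n). -/

import Mathlib

inductive BTree where
  | leaf : BTree
  | node : BTree → BTree → BTree
deriving DecidableEq

def BTree.leaves : BTree → ℕ
  | .leaf => 1
  | .node l r => l.leaves + r.leaves

def BTree.colless : BTree → ℕ
  | .leaf => 0
  | .node l r => l.colless + r.colless + (max l.leaves r.leaves - min l.leaves r.leaves)

/-- The fully symmetric bifurcating tree of height `k`, with `2^k` leaves. -/
def fullSym : ℕ → BTree
  | 0 => .leaf
  | k + 1 => .node (fullSym k) (fullSym k)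

/-! The Colless index is a sum of nonnegative terms, so it vanishes exactly when every node is
balanced. By induction both subtrees of a balanced node are then fully
symmetric, of heights `k` and `m`, and balance `2 ^ k = 2 ^ m` forces `k = m`. -/

namespace BTree

theorem colless_node_eq_zero_iff (l r : BTree) :
    (node l r).colless = 0 ↔ l.colless = 0 ∧ r.colless = 0 ∧ l.leaves = r.leaves := by
  simp only [colless]
  omega

theorem leaves_fullSym (k : ℕ) : (fullSym k).leaves = 2 ^ k := by
  induction k with
  | zero => rfl
  | succ k ih => rw [fullSym, leaves, ih, pow_succ, mul_two]

theorem colless_fullSym (k : ℕ) : (fullSym k).colless = 0 := by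
  induction k with
  | zero => rfl
  | succ k ih => exact (colless_node_eq_zero_iff _ _).2 ⟨ih, ih, rfl⟩

theorem exists_eq_fullSym_of_colless_eq_zero {T : BTree} (h : T.colless = 0) :
    ∃ k, T = fullSym k := by
  induction T with
  | leaf => exact ⟨0, rfl⟩
  | node l r ihl ihr =>
    obtain ⟨hl, hr, hleaves⟩ := (colless_node_eq_zero_iff l r).1 h
    obtain ⟨k, rfl⟩ := ihl hl
    obtain ⟨m, rfl⟩ := ihr hr
    rw [leaves_fullSym, leaves_fullSym] at hleaves
    obtain rfl : k = m := Nat.pow_right_injective le_rfl hleaves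
    exact ⟨k + 1, rfl⟩

end BTree

theorem colless_eq_zero_iff_fullSym (T : BTree) :
    T.colless = 0 ↔ ∃ k : ℕ, T.leaves = 2 ^ k ∧ T = fullSym k := by
  constructor
  · intro h
    obtain ⟨k, rfl⟩ := BTree.exists_eq_fullSym_of_colless_eq_zero h
    exact ⟨k, BTree.leaves_fullSym k, rfl⟩
  · rintro ⟨k, -, rfl⟩
    exact BTree.colless_fullSym k
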